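/- Let α be an admissible sequence such that for every C > 1 the sequence (φ_α(n)/φ_α(Cn))_n is eventually non-increasing, and assume φ_α does not satisfy the condition Δ2. Let K ⊂ ℂ∖\overline{𝔻} be a compact set with connected complement. If FU_α(𝔻,K) is non-empty, then there exists a non-increasing sequence (τ_n)_n with τ_n > 1 and τ_n → 1 such that every polynomial can be uniformly approximated on K by polynomials of the form ∑_{k=⌊n/τ_n⌋}^{n} a_k z^k (i.e. for every polynomial φ and every ε > 0 there exist n and such a polynomial P with ‖P − φ‖_K ≤ ε). In particular, K has empty interior. -/

import Mathlib

/-- A sequence `(α_k)_{k ≥ 1}` of non-negative reals is admissible if `∑ α_k = ∞`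
and `α_n / ∑_{j=1}^n α_j → 0`. -/
def Admissible (α : ℕ → ℝ) : Prop :=
  (∀ k, 1 ≤ k → 0 ≤ α k) ∧
  Filter.Tendsto (fun n : ℕ => ∑ k ∈ Finset.Icc 1 n, α k) Filter.atTop Filter.atTop ∧
  Filter.Tendsto (fun n : ℕ => α n / ∑ k ∈ Finset.Icc 1 n, α k) Filter.atTop (nhds 0)

/-- `φ_α(x) = ∑_{k=1}^{⌊x⌋} α_k` for real `x`. -/
noncomputable def phiAlpha (α : ℕ → ℝ) (x : ℝ) : ℝ :=
  ∑ k ∈ Finset.Icc 1 ⌊x⌋₊, α k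

/-- `φ_α` satisfies the condition `Δ2` if `φ_α(2x) ≤ K φ_α(x)` for some `K > 0` and all
sufficiently large `x`. -/
def Delta2 (α : ℕ → ℝ) : Prop :=
  ∃ K : ℝ, 0 < K ∧ ∃ x₀ : ℝ, ∀ x : ℝ, x₀ ≤ x → phiAlpha α (2 * x) ≤ K * phiAlpha α x

/-- Lower `α`-density of a set of natural numbers. -/
noncomputable def alphaLowerDensity (α : ℕ → ℝ) (E : Set ℕ) : ℝ :=
  Filter.liminf (fun n : ℕ =>
    (∑ k ∈ Finset.Icc 1 n, E.indicator (fun k => α k) k) /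
      (∑ k ∈ Finset.Icc 1 n, α k)) Filter.atTop

/-- Sup norm of a function on a set: `sup_{z ∈ K} |g z|`. -/
noncomputable def supNorm (g : ℂ → ℂ) (K : Set ℂ) : ℝ :=
  sSup ((fun z => norm (g z)) '' K)

/-- The `n`-th Taylor partial sum of `f` at `0`: `∑_{k=0}^n (f^{(k)}(0)/k!) z^k`. -/
noncomputable def taylorSum (f : ℂ → ℂ) (n : ℕ) (z : ℂ) : ℂ :=
  ∑ k ∈ Finset.range (n + 1), (iteratedDeriv k f 0 / (k.factorial : ℂ)) * z ^ k

/- ### Auxiliary material -/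

open Filter

noncomputable def psiA (α : ℕ → ℝ) (n : ℕ) : ℝ := ∑ k ∈ Finset.Icc 1 n, α k

noncomputable def numA (α : ℕ → ℝ) (E : Set ℕ) (n : ℕ) : ℝ :=
  ∑ k ∈ Finset.Icc 1 n, E.indicator (fun k => α k) k

lemma phiAlpha_eq (α : ℕ → ℝ) (x : ℝ) : phiAlpha α x = psiA α ⌊x⌋₊ := rfl

lemma phiAlpha_natCast (α : ℕ → ℝ) (n : ℕ) : phiAlpha α (n : ℝ) = psiA α n := by
  rw [phiAlpha_eq, Nat.floor_natCast]

lemma dens_eq (α : ℕ → ℝ) (E : Set ℕ) :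
    alphaLowerDensity α E = liminf (fun n => numA α E n / psiA α n) atTop := rfl

section basics
variable {α : ℕ → ℝ} (hpos : ∀ k, 1 ≤ k → 0 ≤ α k)
include hpos

lemma psiA_nonneg (n : ℕ) : 0 ≤ psiA α n :=
  Finset.sum_nonneg fun k hk => hpos k (Finset.mem_Icc.mp hk).1

lemma psiA_mono : Monotone (psiA α) := by
  intro m n hmn
  exact Finset.sum_le_sum_of_subset_of_nonneg
    (Finset.Icc_subset_Icc_right hmn)
    (fun k hk _ => hpos k (Finset.mem_Icc.mp hk).1)

lemma phiAlpha_mono {x y : ℝ} (hxy : x ≤ y) : phiAlpha α x ≤ phiAlpha α y := by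
  rw [phiAlpha_eq, phiAlpha_eq]
  exact psiA_mono hpos (Nat.floor_mono hxy)

lemma numA_nonneg (E : Set ℕ) (n : ℕ) : 0 ≤ numA α E n := by
  refine Finset.sum_nonneg fun k hk => ?_
  have hk1 := (Finset.mem_Icc.mp hk).1
  by_cases h : k ∈ E
  · rw [Set.indicator_of_mem h]; exact hpos k hk1
  · rw [Set.indicator_of_notMem h]

lemma numA_le_psiA (E : Set ℕ) {M : ℕ} (n : ℕ) (hM : 1 ≤ M) (hMn : M ≤ n)
    (hgap : ∀ m, m ∈ E → M ≤ m → m ≤ n → False) :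
    numA α E n ≤ psiA α (M-1) := by
  have hsplit : numA α E n = ∑ k ∈ Finset.Ico 1 M, E.indicator (fun k => α k) k
      + ∑ k ∈ Finset.Ico M (n+1), E.indicator (fun k => α k) k := by
    rw [numA, ← Finset.Ico_add_one_right_eq_Icc,
      Finset.sum_Ico_consecutive _ (by omega) (by omega)]
  have hzero : ∑ k ∈ Finset.Ico M (n+1), E.indicator (fun k => α k) k = 0 := by
    refine Finset.sum_eq_zero fun k hk => ?_
    obtain ⟨hk1, hk2⟩ := Finset.mem_Ico.mp hk
    have : k ∉ E := fun hkE => hgap k hkE hk1 (by omega)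
    rw [Set.indicator_of_notMem this]
  have hfst : ∑ k ∈ Finset.Ico 1 M, E.indicator (fun k => α k) k ≤ psiA α (M-1) := by
    have heq : Finset.Ico 1 M = Finset.Icc 1 (M-1) := by
      rw [← Finset.Ico_add_one_right_eq_Icc]
      congr 1
      omega
    rw [heq, psiA]
    refine Finset.sum_le_sum fun k hk => ?_
    have hk1 := (Finset.mem_Icc.mp hk).1
    by_cases h : k ∈ E
    · rw [Set.indicator_of_mem h]
    · rw [Set.indicator_of_notMem h]; exact hpos k hk1
  rw [hsplit, hzero, add_zero]
  exact hfst

end basics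

section adm
variable {α : ℕ → ℝ} (hadm : Admissible α)
include hadm

lemma psiA_tendsto : Tendsto (psiA α) atTop atTop := hadm.2.1

lemma psiA_pos_ev : ∀ᶠ n in atTop, 0 < psiA α n := by
  have := (psiA_tendsto hadm).eventually_ge_atTop 1
  filter_upwards [this] with n hn; linarith

omit hadm in
lemma psiA_succ (n : ℕ) : psiA α (n+1) = psiA α n + α (n+1) :=
  Finset.sum_Icc_succ_top (by omega) α

lemma psiA_doubling : ∀ᶠ n in atTop, psiA α (n+1) ≤ 2 * psiA α n := by
  have h1 : ∀ᶠ n in atTop, α n / psiA α n < 1/2 :=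
    hadm.2.2.eventually (gt_mem_nhds (show (0:ℝ) < 1/2 by norm_num))
  obtain ⟨N, hN⟩ := eventually_atTop.mp (h1.and (psiA_pos_ev hadm))
  rw [eventually_atTop]
  refine ⟨N, fun n hn => ?_⟩
  obtain ⟨hd, hp⟩ := hN (n+1) (by omega)
  have h5 : α (n+1) < psiA α (n+1) / 2 := by
    have := (div_lt_iff₀ hp).mp hd; linarith
  have h6 := psiA_succ (α := α) n
  linarith

/-- From failure of Δ2: arbitrarily large `m` with `ψ(3m) > B ψ(m)`. -/
lemma step1 (hnd : ¬ Delta2 α) (B : ℝ) (N : ℕ) :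
    ∃ m : ℕ, N ≤ m ∧ 2 ≤ m ∧ B * psiA α m < psiA α (3*m) := by
  have hpos := hadm.1
  unfold Delta2 at hnd
  push_neg at hnd
  set B' : ℝ := max B 1 with hB'
  obtain ⟨x, hx, hlt⟩ := hnd B' (lt_of_lt_of_le one_pos (le_max_right B 1)) (max (N:ℝ) 2)
  set m : ℕ := ⌊x⌋₊ with hm
  have hx2 : (2:ℝ) ≤ x := le_trans (le_max_right _ _) hx
  have hxN : (N:ℝ) ≤ x := le_trans (le_max_left _ _) hx
  have hm2 : 2 ≤ m := Nat.le_floor hx2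
  have hmN : N ≤ m := Nat.le_floor hxN
  refine ⟨m, hmN, hm2, ?_⟩
  have h1 : phiAlpha α x = psiA α m := by rw [phiAlpha_eq]
  have h2 : phiAlpha α (2*x) ≤ psiA α (3*m) := by
    have hxm : x < m + 1 := Nat.lt_floor_add_one x
    have : (2:ℝ)*x ≤ (3*m : ℕ) := by
      push_cast
      have : (2:ℝ) ≤ m := by exact_mod_cast hm2
      nlinarith
    calc phiAlpha α (2*x) ≤ phiAlpha α ((3*m : ℕ):ℝ) := phiAlpha_mono hpos this
      _ = psiA α (3*m) := by rw [phiAlpha_eq, Nat.floor_natCast]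
  have h3 : B * psiA α m ≤ B' * psiA α m :=
    mul_le_mul_of_nonneg_right (le_max_left B 1) (psiA_nonneg hpos m)
  calc B * psiA α m ≤ B' * psiA α m := h3
    _ = B' * phiAlpha α x := by rw [h1]
    _ < phiAlpha α (2*x) := hlt
    _ ≤ psiA α (3*m) := h2

/-- For each `C > 1` and any `B`, eventually `ψ(⌊Cn⌋) ≥ B ψ(n)`. -/
lemma step3
    (hratio : ∀ C : ℝ, 1 < C → ∃ n₀ : ℕ, ∀ m n : ℕ, n₀ ≤ m → m ≤ n →
      phiAlpha α n / phiAlpha α (C * n) ≤ phiAlpha α m / phiAlpha α (C * m))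
    (hnd : ¬ Delta2 α) (C : ℝ) (hC : 1 < C) (B : ℝ) :
    ∀ᶠ n : ℕ in atTop, B * psiA α n ≤ psiA α ⌊C * (n:ℝ)⌋₊ := by
  have hpos := hadm.1
  have main : ∀ B' : ℝ, 1 ≤ B' → ∀ᶠ n : ℕ in atTop, B' * psiA α n ≤ psiA α ⌊C * (n:ℝ)⌋₊ := by
    intro B hB
    by_contra hcon
    rw [not_eventually] at hcon
    obtain ⟨n₀, hn₀⟩ := hratio C hC
    obtain ⟨N₁, hN₁⟩ := eventually_atTop.mp (psiA_pos_ev hadm)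
    obtain ⟨N₂, hN₂⟩ := eventually_atTop.mp (psiA_doubling hadm)
    set N₃ : ℕ := max n₀ N₁ with hN₃def
    have hfloor_ge : ∀ p : ℕ, p ≤ ⌊C * (p:ℝ)⌋₊ := by
      intro p
      refine Nat.le_floor ?_
      nlinarith [Nat.cast_nonneg (α := ℝ) p, hC]
    have claimA : ∀ n : ℕ, N₃ ≤ n → psiA α ⌊C * (n:ℝ)⌋₊ ≤ B * psiA α n := by
      intro n hn
      obtain ⟨p, hp, hpbad⟩ := (frequently_atTop.mp hcon) (max n N₃)
      push_neg at hpbad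
      have hpn : n ≤ p := le_trans (le_max_left _ _) hp
      have hpN₃ : N₃ ≤ p := le_trans (le_max_right _ _) hp
      have hψn : 0 < psiA α n := hN₁ n (le_trans (le_max_right _ _) hn)
      have hψCn : 0 < psiA α ⌊C * (n:ℝ)⌋₊ :=
        lt_of_lt_of_le hψn (psiA_mono hpos (hfloor_ge n))
      have hψp : 0 < psiA α p := hN₁ p (le_trans (le_max_right _ _) hpN₃)
      have hψCp : 0 < psiA α ⌊C * (p:ℝ)⌋₊ :=
        lt_of_lt_of_le hψp (psiA_mono hpos (hfloor_ge p))
      have hr := hn₀ n p (le_trans (le_max_left _ _) hn) hpn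
      rw [phiAlpha_natCast, phiAlpha_natCast, phiAlpha_eq, phiAlpha_eq] at hr
      have h1 : 1 / B < psiA α p / psiA α ⌊C * (p:ℝ)⌋₊ := by
        rw [div_lt_div_iff₀ (by linarith) hψCp]
        linarith
      have h2 : 1 / B < psiA α n / psiA α ⌊C * (n:ℝ)⌋₊ := lt_of_lt_of_le h1 hr
      rw [div_lt_div_iff₀ (by linarith) hψCn] at h2
      linarith
    obtain ⟨k, hk⟩ := pow_unbounded_of_one_lt (3:ℝ) hC
    set N₄ : ℕ := max (max N₃ N₂) 1 with hN₄def
    have key : ∀ n : ℕ, N₄ ≤ n → psiA α (3*n) ≤ ((2*B)^k + 1) * psiA α n := by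
      intro n hn
      set g : ℕ → ℕ := fun i => Nat.rec n (fun _ m => ⌊C * (m:ℝ)⌋₊ + 1) i with hg
      have hg0 : g 0 = n := rfl
      have hgs : ∀ i, g (i+1) = ⌊C * (g i : ℝ)⌋₊ + 1 := fun i => rfl
      have hge : ∀ i, n ≤ g i := by
        intro i; induction i with
        | zero => exact hg0.ge
        | succ i ih => rw [hgs]; exact le_trans ih (le_trans (hfloor_ge (g i)) (Nat.le_succ _))
      have hgrow : ∀ i, C^i * n ≤ (g i : ℝ) := by
        intro i; induction i with
        | zero => rw [hg0]; simp
        | succ i ih =>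
          rw [hgs]
          push_cast
          have h1 : C^(i+1) * n = C * (C^i * n) := by ring
          have h2 : C * (C^i * n) ≤ C * (g i : ℝ) :=
            mul_le_mul_of_nonneg_left ih (by linarith)
          have h3 : C * (g i : ℝ) ≤ ⌊C * (g i : ℝ)⌋₊ + 1 :=
            le_of_lt (Nat.lt_floor_add_one _)
          linarith
      have hψg : ∀ i, psiA α (g i) ≤ (2*B)^i * psiA α n := by
        intro i; induction i with
        | zero => rw [hg0]; simp
        | succ i ih =>
          rw [hgs]
          have hgiN₃ : N₃ ≤ g i :=
            le_trans (le_trans (le_trans (le_max_left _ _) (le_max_left _ _)) hn) (hge i)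
          have hgiN₂ : N₂ ≤ ⌊C * (g i : ℝ)⌋₊ := by
            refine le_trans ?_ (hfloor_ge (g i))
            exact le_trans (le_trans (le_trans (le_max_right _ _) (le_max_left _ _)) hn) (hge i)
          have hdub := hN₂ ⌊C * (g i : ℝ)⌋₊ hgiN₂
          have hA := claimA (g i) hgiN₃
          have hψgi : 0 ≤ psiA α (g i) := psiA_nonneg hpos _
          have hB2 : (0:ℝ) ≤ 2*B := by linarith
          calc psiA α (⌊C * (g i : ℝ)⌋₊ + 1) ≤ 2 * psiA α ⌊C * (g i : ℝ)⌋₊ := hdub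
            _ ≤ 2 * (B * psiA α (g i)) := by linarith
            _ = (2*B) * psiA α (g i) := by ring
            _ ≤ (2*B) * ((2*B)^i * psiA α n) := mul_le_mul_of_nonneg_left ih hB2
            _ = (2*B)^(i+1) * psiA α n := by ring
      have h3n : (3*n : ℕ) ≤ g k := by
        have h1 : (3:ℝ) * n ≤ C^k * n := by
          have hn1 : (1:ℝ) ≤ n := by
            have : 1 ≤ n := le_trans (le_max_right _ _) hn
            exact_mod_cast this
          nlinarith
        have := le_trans h1 (hgrow k)
        exact_mod_cast (by push_cast; linarith : ((3*n : ℕ) : ℝ) ≤ (g k : ℝ))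
      have hψn : 0 ≤ psiA α n := psiA_nonneg hpos n
      calc psiA α (3*n) ≤ psiA α (g k) := psiA_mono hpos h3n
        _ ≤ (2*B)^k * psiA α n := hψg k
        _ ≤ ((2*B)^k + 1) * psiA α n := by nlinarith
    obtain ⟨m, hmN₄, hm2, hmlt⟩ := step1 hadm hnd ((2*B)^k + 1) N₄
    exact absurd (key m hmN₄) (not_le.mpr hmlt)
  have h := main (max B 1) (le_max_right B 1)
  filter_upwards [h] with n hn
  have : B * psiA α n ≤ (max B 1) * psiA α n :=
    mul_le_mul_of_nonneg_right (le_max_left B 1) (psiA_nonneg hpos n)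
  linarith

/-- Division form of `step3`. -/
lemma step3'
    (hratio : ∀ C : ℝ, 1 < C → ∃ n₀ : ℕ, ∀ m n : ℕ, n₀ ≤ m → m ≤ n →
      phiAlpha α n / phiAlpha α (C * n) ≤ phiAlpha α m / phiAlpha α (C * m))
    (hnd : ¬ Delta2 α) (C : ℝ) (hC : 1 < C) (B : ℝ) :
    ∀ᶠ n : ℕ in atTop, B * psiA α ⌊(n:ℝ)/C⌋₊ ≤ psiA α n := by
  have hpos := hadm.1
  obtain ⟨N, hN⟩ := eventually_atTop.mp (step3 hadm hratio hnd C hC B)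
  rw [eventually_atTop]
  refine ⟨⌈C * (N+1)⌉₊, fun n hn => ?_⟩
  have hC0 : (0:ℝ) < C := by linarith
  have hnR : C * (N+1) ≤ (n:ℝ) := le_trans (Nat.le_ceil _) (by exact_mod_cast hn)
  set m : ℕ := ⌊(n:ℝ)/C⌋₊ with hm
  have hmN : N ≤ m := by
    refine Nat.le_floor ?_
    rw [le_div_iff₀ hC0]
    push_cast; nlinarith
  have h1 := hN m hmN
  refine le_trans h1 (psiA_mono hpos ?_)
  have h2 : C * (m:ℝ) ≤ n := by
    have := Nat.floor_le (show (0:ℝ) ≤ (n:ℝ)/C by positivity)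
    rw [← hm] at this
    calc C * (m:ℝ) ≤ C * ((n:ℝ)/C) := mul_le_mul_of_nonneg_left this (by linarith)
      _ = n := by field_simp
  calc ⌊C * (m:ℝ)⌋₊ ≤ ⌊(n:ℝ)⌋₊ := Nat.floor_mono h2
    _ = n := Nat.floor_natCast n

/-- Construction of the sequence `τ`. -/
lemma tau_exists
    (hratio : ∀ C : ℝ, 1 < C → ∃ n₀ : ℕ, ∀ m n : ℕ, n₀ ≤ m → m ≤ n →
      phiAlpha α n / phiAlpha α (C * n) ≤ phiAlpha α m / phiAlpha α (C * m))
    (hnd : ¬ Delta2 α) :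
    ∃ τ : ℕ → ℝ, (∀ n, 1 < τ n) ∧ (∀ n, τ n ≤ 2) ∧ Antitone τ ∧
      Tendsto τ atTop (nhds 1) ∧
      (∀ B : ℝ, ∀ᶠ n : ℕ in atTop, B * psiA α ⌊(n:ℝ)/τ n⌋₊ ≤ psiA α n) := by
  have hpos := hadm.1
  set Cs : ℕ → ℝ := fun j => 1 + (2⁻¹:ℝ)^j with hCs
  have hCs1 : ∀ j, 1 < Cs j := fun j => by
    have : (0:ℝ) < (2⁻¹:ℝ)^j := by positivity
    simp only [hCs]; linarith
  have hprop : ∀ j : ℕ, ∃ N : ℕ, ∀ n ≥ N, ((j:ℝ)+1) * psiA α ⌊(n:ℝ)/Cs j⌋₊ ≤ psiA α n := by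
    intro j
    exact eventually_atTop.mp (step3' hadm hratio hnd (Cs j) (hCs1 j) ((j:ℝ)+1))
  choose Nf hNf using hprop
  set N' : ℕ → ℕ := fun j => j + ∑ i ∈ Finset.range (j+1), Nf i with hN'
  have hN'mono : StrictMono N' := by
    apply strictMono_nat_of_lt_succ
    intro j
    simp only [hN', Finset.sum_range_succ]
    omega
  have hN'ge : ∀ j, Nf j ≤ N' j := by
    intro j
    have : Nf j ≤ ∑ i ∈ Finset.range (j+1), Nf i :=
      Finset.single_le_sum (f := Nf) (fun i _ => Nat.zero_le _) (Finset.self_mem_range_succ j)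
    simp only [hN']
    omega
  set J : ℕ → ℕ := fun n => Nat.findGreatest (fun j => N' j ≤ n) n with hJ
  have hJ_ge : ∀ j n, N' j ≤ n → j ≤ J n := by
    intro j n h
    exact Nat.le_findGreatest (le_trans (hN'mono.le_apply) h) h
  have hJ_spec : ∀ n, 0 < J n → N' (J n) ≤ n := by
    intro n h
    rcases le_or_gt (N' 0) n with h0 | h0
    · exact Nat.findGreatest_spec (P := fun j => N' j ≤ n) (Nat.zero_le n) h0
    · exfalso
      have hz : J n = 0 := Nat.findGreatest_eq_zero_iff.mpr
        (fun k hk hkn hNk => (not_le.mpr h0) (le_trans (hN'mono.monotone (Nat.zero_le k)) hNk))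
      omega
  have hJmono : Monotone J := by
    intro a b hab
    rcases Nat.eq_zero_or_pos (J a) with h | h
    · omega
    · exact Nat.le_findGreatest (le_trans (le_trans (Nat.findGreatest_le a) hab) (le_refl b))
        (le_trans (hJ_spec a h) hab)
  have hJtend : Tendsto J atTop atTop := by
    rw [tendsto_atTop]
    intro j
    rw [eventually_atTop]
    exact ⟨N' j, fun n hn => hJ_ge j n hn⟩
  refine ⟨fun n => Cs (J n), fun n => hCs1 _, ?_, ?_, ?_, ?_⟩
  · intro n
    have : (2⁻¹:ℝ)^(J n) ≤ 1 := pow_le_one₀ (by norm_num) (by norm_num)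
    simp only [hCs]; linarith
  · intro a b hab
    have h := hJmono hab
    have : (2⁻¹:ℝ)^(J b) ≤ (2⁻¹:ℝ)^(J a) := pow_le_pow_of_le_one (by norm_num) (by norm_num) h
    simp only [hCs]; linarith
  · have h0 : Tendsto (fun n => (2⁻¹:ℝ)^(J n)) atTop (nhds 0) :=
      (tendsto_pow_atTop_nhds_zero_of_lt_one (by norm_num) (by norm_num)).comp hJtend
    have h1 := h0.const_add (1:ℝ)
    rw [add_zero] at h1
    exact h1
  · intro B
    set j₀ : ℕ := max 1 ⌈B⌉₊ with hj₀
    rw [eventually_atTop]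
    refine ⟨N' j₀, fun n hn => ?_⟩
    have hj₀J : j₀ ≤ J n := hJ_ge j₀ n hn
    have hJpos : 0 < J n := lt_of_lt_of_le (lt_of_lt_of_le one_pos (le_max_left _ _)) hj₀J
    have hspec : N' (J n) ≤ n := hJ_spec n hJpos
    have hNfJ : Nf (J n) ≤ n := le_trans (hN'ge _) hspec
    have hkey := hNf (J n) n hNfJ
    have hB : B ≤ (J n : ℝ) + 1 := by
      have h1 : B ≤ (⌈B⌉₊ : ℝ) := Nat.le_ceil B
      have h2 : (⌈B⌉₊:ℕ) ≤ J n := le_trans (le_max_right _ _) hj₀J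
      have : ((⌈B⌉₊:ℕ):ℝ) ≤ (J n : ℝ) := by exact_mod_cast h2
      linarith
    calc B * psiA α ⌊(n:ℝ)/Cs (J n)⌋₊ ≤ ((J n:ℝ)+1) * psiA α ⌊(n:ℝ)/Cs (J n)⌋₊ :=
          mul_le_mul_of_nonneg_right hB (psiA_nonneg hpos _)
      _ ≤ psiA α n := hkey

lemma dratio_nonneg (E : Set ℕ) (n : ℕ) : 0 ≤ numA α E n / psiA α n :=
  div_nonneg (numA_nonneg hadm.1 E n) (psiA_nonneg hadm.1 n)

lemma dens_ev_lt (E : Set ℕ) (hE : 0 < alphaLowerDensity α E) :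
    ∀ᶠ n in atTop, alphaLowerDensity α E / 2 < numA α E n / psiA α n := by
  have hb : IsBoundedUnder (· ≥ ·) atTop (fun n => numA α E n / psiA α n) :=
    ⟨0, eventually_map.mpr (Eventually.of_forall fun n => dratio_nonneg hadm E n)⟩
  exact Filter.eventually_lt_of_lt_liminf (by rw [← dens_eq]; linarith) hb

/-- A set of positive lower density meets every window `[⌊n/τ n⌋, n]` eventually. -/
lemma window {τ : ℕ → ℝ} (hτ1 : ∀ n, 1 < τ n) (hτ2 : ∀ n, τ n ≤ 2)
    (hkey : ∀ B : ℝ, ∀ᶠ n : ℕ in atTop, B * psiA α ⌊(n:ℝ)/τ n⌋₊ ≤ psiA α n)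
    (E : Set ℕ) (hE : 0 < alphaLowerDensity α E) :
    ∀ᶠ n : ℕ in atTop, ∃ m, m ∈ E ∧ ⌊(n:ℝ)/τ n⌋₊ ≤ m ∧ m ≤ n := by
  have hpos := hadm.1
  set δ := alphaLowerDensity α E with hδ
  filter_upwards [dens_ev_lt hadm E hE, hkey (4/δ), psiA_pos_ev hadm,
    eventually_ge_atTop 2] with n h1 h2 h3 h4
  by_contra hno
  push_neg at hno
  set M : ℕ := ⌊(n:ℝ)/τ n⌋₊ with hM
  have hτpos : (0:ℝ) < τ n := lt_trans one_pos (hτ1 n)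
  have hM1 : 1 ≤ M := by
    refine Nat.le_floor ?_
    rw [le_div_iff₀ hτpos]
    have : (2:ℝ) ≤ (n:ℝ) := by exact_mod_cast h4
    have := hτ2 n
    push_cast
    linarith
  have hMn : M ≤ n := by
    have h5 : (n:ℝ)/τ n ≤ n := by
      rw [div_le_iff₀ hτpos]
      have := hτ1 n
      nlinarith [Nat.cast_nonneg (α := ℝ) n]
    calc M = ⌊(n:ℝ)/τ n⌋₊ := rfl
      _ ≤ ⌊(n:ℝ)⌋₊ := Nat.floor_mono h5
      _ = n := Nat.floor_natCast n
  have hnum : numA α E n ≤ psiA α (M-1) :=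
    numA_le_psiA hpos E n hM1 hMn
      (fun m hmE hm1 hm2 => absurd (hno m hmE hm1) (by omega))
  have hδpos : 0 < δ := hE
  rw [div_mul_eq_mul_div, div_le_iff₀ hδpos] at h2
  have h8 : δ/2 * psiA α n < numA α E n := by
    rw [hδ]
    exact (lt_div_iff₀ h3).mp h1
  have h9 : psiA α (M-1) ≤ psiA α M := psiA_mono hpos (by omega)
  nlinarith [h2, h8, h9, hnum, h3, hδpos]

/-- A set of positive lower density is unbounded. -/
lemma unbounded_of_density (E : Set ℕ) (hE : 0 < alphaLowerDensity α E) :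
    ∀ N : ℕ, ∃ n, N ≤ n ∧ n ∈ E := by
  have hpos := hadm.1
  intro N
  by_contra hno
  push_neg at hno
  have hnum : ∀ n, N ≤ n → numA α E n ≤ psiA α N := by
    intro n hn
    rw [numA]
    calc ∑ k ∈ Finset.Icc 1 n, E.indicator (fun k => α k) k
        = ∑ k ∈ Finset.Ico 1 (N+1), E.indicator (fun k => α k) k
          + ∑ k ∈ Finset.Ico (N+1) (n+1), E.indicator (fun k => α k) k := by
          rw [← Finset.Ico_add_one_right_eq_Icc, Finset.sum_Ico_consecutive _ (by omega) (by omega)]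
      _ = ∑ k ∈ Finset.Ico 1 (N+1), E.indicator (fun k => α k) k := by
          have hz : ∑ k ∈ Finset.Ico (N+1) (n+1), E.indicator (fun k => α k) k = 0 := by
            refine Finset.sum_eq_zero fun k hk => ?_
            obtain ⟨hk1, hk2⟩ := Finset.mem_Ico.mp hk
            exact Set.indicator_of_notMem (hno k (by omega)) _
          rw [hz, add_zero]
      _ ≤ psiA α N := by
          rw [Finset.Ico_add_one_right_eq_Icc, psiA]
          refine Finset.sum_le_sum fun k hk => ?_
          have hk1 := (Finset.mem_Icc.mp hk).1
          by_cases h : k ∈ E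
          · rw [Set.indicator_of_mem h]
          · rw [Set.indicator_of_notMem h]; exact hpos k hk1
  have htend : Tendsto (fun n => numA α E n / psiA α n) atTop (nhds 0) := by
    have hub : Tendsto (fun n : ℕ => psiA α N / psiA α n) atTop (nhds 0) :=
      Filter.Tendsto.div_atTop tendsto_const_nhds (psiA_tendsto hadm)
    apply squeeze_zero'
      (Eventually.of_forall fun n => div_nonneg (numA_nonneg hpos E n) (psiA_nonneg hpos n))
      ?_ hub
    filter_upwards [eventually_ge_atTop N, psiA_pos_ev hadm] with n hn hp
    gcongr
    exact hnum n hn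
  have : alphaLowerDensity α E = 0 := by
    rw [dens_eq]
    exact htend.liminf_eq
  linarith

end adm

/- ### supNorm lemmas -/

lemma le_supNorm {K : Set ℂ} (hK : IsCompact K) {g : ℂ → ℂ} (hg : Continuous g)
    {z : ℂ} (hz : z ∈ K) : norm (g z) ≤ supNorm g K := by
  refine le_csSup ?_ ⟨z, hz, rfl⟩
  exact (hK.image (continuous_norm.comp hg)).bddAbove

lemma supNorm_le {K : Set ℂ} {g : ℂ → ℂ} {ε : ℝ} (hε : 0 ≤ ε)
    (h : ∀ z ∈ K, norm (g z) ≤ ε) : supNorm g K ≤ ε := by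
  refine Real.sSup_le ?_ hε
  rintro x ⟨z, hz, rfl⟩
  exact h z hz

lemma taylorSum_continuous (f : ℂ → ℂ) (n : ℕ) : Continuous fun z => taylorSum f n z := by
  unfold taylorSum
  exact continuous_finset_sum _ fun k _ => continuous_const.mul (continuous_pow k)

lemma multiset_prod_le (s : Multiset ℂ) (f g : ℂ → ℝ) :
    (∀ w ∈ s, 0 ≤ f w) → (∀ w ∈ s, f w ≤ g w) → (s.map f).prod ≤ (s.map g).prod := by
  induction s using Multiset.induction_on with
  | empty => intro _ _; simp
  | cons w s ih =>
    intro h0 h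
    rw [Multiset.map_cons, Multiset.map_cons, Multiset.prod_cons, Multiset.prod_cons]
    have hf0 : 0 ≤ (s.map f).prod := by
      refine Multiset.prod_nonneg ?_
      intro x hx
      obtain ⟨w', hw', rfl⟩ := Multiset.mem_map.mp hx
      exact h0 w' (Multiset.mem_cons_of_mem hw')
    refine mul_le_mul (h w (Multiset.mem_cons_self _ _)) (ih ?_ ?_) hf0 ?_
    · intro w' hw'; exact h0 w' (Multiset.mem_cons_of_mem hw')
    · intro w' hw'; exact h w' (Multiset.mem_cons_of_mem hw')
    · exact le_trans (h0 w (Multiset.mem_cons_self _ _)) (h w (Multiset.mem_cons_self _ _))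

/-- The polynomial contradiction: a polynomial `P = X^M * Q` of degree ≤ n with
`1/2 ≤ |P| ≤ 3/2` on a closed ball inside `K`, where `M` is large relative to `n - M`,
is impossible. -/
lemma partE_poly {K : Set ℂ} (a : ℂ) (ρ : ℝ) (hρpos : 0 < ρ)
    (hsub : Metric.closedBall a ρ ⊆ K)
    (z₁ z₂ : ℂ) (hz₁a : norm (z₁ - a) = ρ/2) (hz₂a : norm (z₂ - a) = ρ/2)
    (h12 : norm (z₁ - z₂) = ρ)
    (hz₁pos : 0 < norm z₁) (hz₂pos : 0 < norm z₂)
    (K₀ : ℕ) (hK₀ : 3 < (norm z₂ / norm z₁) ^ K₀)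
    (P : Polynomial ℂ) (n M : ℕ)
    (hdeg : P.natDegree ≤ n)
    (hlow : ∀ k : ℕ, k < M → P.coeff k = 0)
    (harith : K₀ * (n + 1) ≤ M * (K₀ + 1))
    (hlb : ∀ z ∈ K, 1/2 ≤ norm (P.eval z))
    (hub : ∀ z ∈ K, norm (P.eval z) ≤ 3/2) : False := by
  set c : ℝ := norm z₂ / norm z₁ with hc
  have hc1 : 1 < c := by
    by_contra hle
    push_neg at hle
    have : c ^ K₀ ≤ 1 := pow_le_one₀ (by positivity) hle
    linarith
  have hz₁K : z₁ ∈ K := hsub (by rw [Metric.mem_closedBall, Complex.dist_eq, hz₁a]; linarith)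
  have hz₂K : z₂ ∈ K := hsub (by rw [Metric.mem_closedBall, Complex.dist_eq, hz₂a]; linarith)
  have haK : a ∈ K := hsub (Metric.mem_closedBall.mpr (by simp [hρpos.le]))
  have hPne : P ≠ 0 := by
    intro h
    have h2 := hlb a haK
    rw [h] at h2
    simp at h2
    linarith
  obtain ⟨Q, hQ⟩ := Polynomial.X_pow_dvd_iff.mpr (fun e he => hlow e he)
  have hQne : Q ≠ 0 := fun h => hPne (by rw [hQ, h, mul_zero])
  set d : ℕ := Q.natDegree with hd
  have hMdn : M + d ≤ n := by
    have h1 : P.natDegree = M + d := by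
      rw [hQ, Polynomial.natDegree_mul (pow_ne_zero _ Polynomial.X_ne_zero) hQne,
        Polynomial.natDegree_X_pow]
    omega
  have hPeval : ∀ z : ℂ, P.eval z = z^M * Q.eval z := by
    intro z
    rw [hQ, Polynomial.eval_mul, Polynomial.eval_pow, Polynomial.eval_X]
  have hsplit : Polynomial.Splits Q := IsAlgClosed.splits Q
  have hcard : Multiset.card Q.roots = d := Polynomial.splits_iff_card_roots.mp hsplit
  have habsQ : ∀ z : ℂ, norm (Q.eval z)
      = norm Q.leadingCoeff * ((Q.roots.map (fun w => norm (z - w))).prod) := by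
    intro z
    have h1 : Q.eval z = Q.leadingCoeff * ((Q.roots.map fun w => z - w).prod) := by
      conv_lhs => rw [hsplit.eq_prod_roots]
      rw [Polynomial.eval_mul, Polynomial.eval_C, Polynomial.eval_multiset_prod,
        Multiset.map_map]
      congr 2
      refine Multiset.map_congr rfl fun w _ => ?_
      simp
    rw [h1, norm_mul, show ‖(Q.roots.map fun w => z - w).prod‖ = normHom (Q.roots.map fun w => z - w).prod from rfl, map_multiset_prod, Multiset.map_map]
    rfl
  have hroots : ∀ w ∈ Q.roots, ρ < dist w a := by
    intro w hw
    by_contra hle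
    push_neg at hle
    have hwK : w ∈ K := hsub (Metric.mem_closedBall.mpr hle)
    have hQw : Q.eval w = 0 := Polynomial.isRoot_of_mem_roots hw
    have hPw : P.eval w = 0 := by rw [hPeval, hQw, mul_zero]
    have h2 := hlb w hwK
    rw [hPw] at h2
    simp at h2
    linarith
  have hperroot : ∀ w ∈ Q.roots, norm (z₁ - w) ≤ 3 * norm (z₂ - w) := by
    intro w hw
    have h1 : ρ < dist w a := hroots w hw
    have h2 : ρ/2 ≤ norm (z₂ - w) := by
      have h3 : dist w a ≤ dist w z₂ + dist z₂ a := dist_triangle _ _ _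
      have h4 : dist z₂ a = ρ/2 := by rw [Complex.dist_eq, hz₂a]
      have h5 : dist w z₂ = norm (z₂ - w) := by
        rw [Complex.dist_eq, ← norm_neg]
        congr 1
        ring
      linarith
    calc norm (z₁ - w) ≤ norm (z₁ - z₂) + norm (z₂ - w) := by
          have h7 : z₁ - w = (z₁ - z₂) + (z₂ - w) := by ring
          rw [h7]; exact norm_add_le _ _
      _ = ρ + norm (z₂ - w) := by rw [h12]
      _ ≤ 3 * norm (z₂ - w) := by linarith
  have hprod : ((Q.roots.map (fun w => norm (z₁ - w))).prod)
      ≤ 3^d * ((Q.roots.map (fun w => norm (z₂ - w))).prod) := by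
    have h1 := multiset_prod_le Q.roots (fun w => norm (z₁ - w))
      (fun w => 3 * norm (z₂ - w))
      (fun w _ => norm_nonneg _) hperroot
    have h2 : ((Q.roots.map (fun w => 3 * norm (z₂ - w))).prod)
        = 3^d * ((Q.roots.map (fun w => norm (z₂ - w))).prod) := by
      rw [show (fun w => 3 * norm (z₂ - w))
          = (fun w => (fun _ => (3:ℝ)) w * (fun w => norm (z₂ - w)) w) by rfl]
      rw [Multiset.prod_map_mul]
      congr 1
      rw [Multiset.map_const', Multiset.prod_replicate, hcard]
    rw [h2] at h1
    exact h1
  have hQz₁ : 1/2 ≤ norm z₁ ^ M * norm (Q.eval z₁) := by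
    have h := hlb z₁ hz₁K
    rw [hPeval z₁, norm_mul, norm_pow] at h
    exact h
  have hQz₂ : norm z₂ ^ M * norm (Q.eval z₂) ≤ 3/2 := by
    have h := hub z₂ hz₂K
    rw [hPeval z₂, norm_mul, norm_pow] at h
    exact h
  have hQcomp : norm (Q.eval z₁) ≤ 3^d * norm (Q.eval z₂) := by
    rw [habsQ z₁, habsQ z₂]
    have hlc : 0 ≤ norm Q.leadingCoeff := norm_nonneg _
    calc norm Q.leadingCoeff * ((Q.roots.map (fun w => norm (z₁ - w))).prod)
        ≤ norm Q.leadingCoeff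
            * (3^d * ((Q.roots.map (fun w => norm (z₂ - w))).prod)) :=
          mul_le_mul_of_nonneg_left hprod hlc
      _ = 3^d * (norm Q.leadingCoeff
            * ((Q.roots.map (fun w => norm (z₂ - w))).prod)) := by ring
  have hp1 : (0:ℝ) < norm z₁ ^ M := by positivity
  have hp2 : (0:ℝ) < norm z₂ ^ M := by positivity
  have h4 : (0:ℝ) < (3:ℝ)^d := by positivity
  have hz₂M : norm z₂ ^ M ≤ 3^(d+1) * norm z₁ ^ M := by
    have h1 : 1/2 ≤ norm z₁ ^ M * (3^d * norm (Q.eval z₂)) := by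
      calc (1:ℝ)/2 ≤ norm z₁ ^ M * norm (Q.eval z₁) := hQz₁
        _ ≤ _ := mul_le_mul_of_nonneg_left hQcomp (le_of_lt hp1)
    -- |Q z₂| ≤ (3/2)/|z₂|^M
    have h2 : norm (Q.eval z₂) ≤ (3/2) / norm z₂ ^ M := by
      rw [le_div_iff₀ hp2]
      linarith [hQz₂]
    have h3 : 1/2 ≤ norm z₁ ^ M * (3^d * ((3/2) / norm z₂ ^ M)) := by
      have hmono : norm z₁ ^ M * (3^d * norm (Q.eval z₂))
          ≤ norm z₁ ^ M * (3^d * ((3/2) / norm z₂ ^ M)) := by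
        refine mul_le_mul_of_nonneg_left ?_ hp1.le
        exact mul_le_mul_of_nonneg_left h2 h4.le
      linarith
    rw [pow_succ'] -- 3^(d+1) = 3 * 3^d
    have h5 : norm z₁ ^ M * (3^d * ((3/2) / norm z₂ ^ M))
        = (3/2) * 3^d * norm z₁ ^ M / norm z₂ ^ M := by ring
    rw [h5] at h3
    rw [le_div_iff₀ hp2] at h3
    nlinarith [h3]
  have hfin : c^M ≤ 3^(d+1) := by
    rw [hc, div_pow, div_le_iff₀ hp1]
    exact hz₂M
  have hKd : K₀ * (d+1) ≤ M := by
    have hr : (K₀:ℝ) * ((d:ℝ)+1) ≤ M := by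
      have h1 : ((K₀:ℝ) * ((n:ℝ)+1)) ≤ (M:ℝ) * ((K₀:ℝ)+1) := by exact_mod_cast harith
      have h2 : (M:ℝ) + (d:ℝ) ≤ (n:ℝ) := by exact_mod_cast hMdn
      have hKr0 : (0:ℝ) ≤ K₀ := Nat.cast_nonneg K₀
      nlinarith
    exact_mod_cast hr
  have hcontr : (3:ℝ)^(d+1) < c^M := by
    calc (3:ℝ)^(d+1) < (c^K₀)^(d+1) :=
          pow_lt_pow_left₀ hK₀ (by norm_num) (Nat.succ_ne_zero d)
      _ = c^(K₀*(d+1)) := by rw [← pow_mul]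
      _ ≤ c^M := pow_le_pow_right₀ (le_of_lt hc1) hKd
  linarith [hfin, hcontr]

-- arithmetic helper
lemma partE_arith {τ : ℕ → ℝ} (hτ1 : ∀ n, 1 < τ n) (hτ2 : ∀ n, τ n ≤ 2)
    (hτtend : Tendsto τ atTop (nhds 1)) (K₀ : ℕ) :
    ∀ᶠ n : ℕ in atTop, K₀ * (n + 1) ≤ ⌊(n : ℝ) / τ n⌋₊ * (K₀ + 1) := by
  set δ : ℝ := 1 / (4 * ((K₀:ℝ) + 1)) with hδdef
  have hδpos : 0 < δ := by positivity
  have hδeq : δ * ((K₀:ℝ) + 1) = 1/4 := by rw [hδdef]; field_simp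
  have h1 : ∀ᶠ n : ℕ in atTop, τ n < 1 + δ :=
    hτtend.eventually_lt_const (by linarith)
  filter_upwards [h1, eventually_ge_atTop (8*K₀ + 12)] with n hτn hn
  set M : ℕ := ⌊(n : ℝ) / τ n⌋₊ with hM
  have hT1 : (1:ℝ) < τ n := hτ1 n
  have hT2 : τ n ≤ 2 := hτ2 n
  have hTpos : (0:ℝ) < τ n := by linarith
  have hMn : M ≤ n := by
    have h5 : (n:ℝ)/τ n ≤ n := by
      rw [div_le_iff₀ hTpos]
      nlinarith [Nat.cast_nonneg (α := ℝ) n]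
    calc M ≤ ⌊(n:ℝ)⌋₊ := Nat.floor_mono h5
      _ = n := Nat.floor_natCast n
  have hfl : (n:ℝ)/τ n < M + 1 := Nat.lt_floor_add_one _
  have hnR : (8*(K₀:ℝ) + 12) ≤ n := by exact_mod_cast hn
  have hB : (n:ℝ)/2 - 1 < M := by
    have h6 : (n:ℝ)/2 ≤ (n:ℝ)/τ n :=
      div_le_div_of_nonneg_left (Nat.cast_nonneg n) hTpos hT2
    linarith
  have hA : (n:ℝ) - M < 1 + δ*((n:ℝ)+1) := by
    have h7 : (n:ℝ) < ((M:ℝ)+1) * τ n := by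
      have h := (div_lt_iff₀ hTpos).mp hfl
      linarith
    have h8 : ((M:ℝ)+1) * τ n < ((M:ℝ)+1)*(1+δ) := by
      have hp : (0:ℝ) < (M:ℝ)+1 := by positivity
      nlinarith
    have h9 : ((M:ℝ)+1)*(1+δ) ≤ (M:ℝ) + 1 + δ*((n:ℝ)+1) := by
      have hMcast : (M:ℝ) ≤ n := by exact_mod_cast hMn
      nlinarith
    linarith
  have hgoal : (K₀:ℝ) * ((n:ℝ)+1) ≤ (M:ℝ) * ((K₀:ℝ)+1) := by
    have hKr0 : (0:ℝ) ≤ K₀ := Nat.cast_nonneg K₀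
    have h10 : (K₀:ℝ) * (((n:ℝ) - M) + 1) ≤ (K₀:ℝ) * (2 + δ*((n:ℝ)+1)) := by
      nlinarith
    have h11 : (K₀:ℝ) * δ ≤ 1/4 := by nlinarith
    have h12 : (K₀:ℝ) * (2 + δ*((n:ℝ)+1)) ≤ 2*(K₀:ℝ) + (1/4)*((n:ℝ)+1) := by
      have hn1 : (0:ℝ) ≤ (n:ℝ)+1 := by positivity
      nlinarith
    nlinarith
  exact_mod_cast hgoal

lemma partE {K : Set ℂ} (hK : IsCompact K)
    (hKD : K ⊆ (Metric.closedBall (0 : ℂ) 1)ᶜ)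
    {τ : ℕ → ℝ} (hτ1 : ∀ n, 1 < τ n) (hτ2 : ∀ n, τ n ≤ 2)
    (hτtend : Tendsto τ atTop (nhds 1))
    (happrox : ∀ N₀ : ℕ,
      ∃ n : ℕ, N₀ ≤ n ∧ ∃ P : Polynomial ℂ, P.natDegree ≤ n ∧
      (∀ k : ℕ, k < ⌊(n : ℝ) / τ n⌋₊ → P.coeff k = 0) ∧
      supNorm (fun z => P.eval z - (1:Polynomial ℂ).eval z) K ≤ 1/2) :
    interior K = ∅ := by
  by_contra hne
  obtain ⟨a, ha⟩ := Set.nonempty_iff_ne_empty.mpr hne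
  obtain ⟨ρ₀, hρ₀, hball⟩ := Metric.isOpen_iff.mp isOpen_interior a ha
  set ρ : ℝ := min (ρ₀/2) (1/2) with hρ
  have hρpos : 0 < ρ := lt_min (by linarith) (by norm_num)
  have hρhalf : ρ ≤ 1/2 := min_le_right _ _
  have hsub : Metric.closedBall a ρ ⊆ K := by
    refine subset_trans ?_ (subset_trans hball interior_subset)
    intro z hz
    rw [Metric.mem_closedBall] at hz
    rw [Metric.mem_ball]
    have : ρ < ρ₀ := lt_of_le_of_lt (min_le_left _ _) (by linarith)
    linarith
  have haK : a ∈ K := interior_subset ha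
  have habs : 1 < norm a := by
    have h := hKD haK
    simp only [Set.mem_compl_iff, Metric.mem_closedBall, not_le] at h
    rwa [Complex.dist_eq, sub_zero] at h
  set t : ℝ := ρ / (2 * norm a) with ht
  have htpos : 0 < t := by positivity
  have htle : t < 1/4 := by
    rw [ht, div_lt_iff₀ (by positivity)]
    nlinarith
  set z₁ : ℂ := a * (1 - (t:ℂ)) with hz₁
  set z₂ : ℂ := a * (1 + (t:ℂ)) with hz₂
  have habs_t : norm a * t = ρ/2 := by
    rw [ht]; field_simp
  have hz₁a : norm (z₁ - a) = ρ/2 := by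
    have h : z₁ - a = -(a * (t:ℂ)) := by rw [hz₁]; ring
    rw [h, norm_neg, norm_mul, Complex.norm_real, Real.norm_eq_abs, abs_of_pos htpos, habs_t]
  have hz₂a : norm (z₂ - a) = ρ/2 := by
    have h : z₂ - a = a * (t:ℂ) := by rw [hz₂]; ring
    rw [h, norm_mul, Complex.norm_real, Real.norm_eq_abs, abs_of_pos htpos, habs_t]
  have h12 : norm (z₁ - z₂) = ρ := by
    have h : z₁ - z₂ = -(a * (((2*t : ℝ)):ℂ)) := by rw [hz₁, hz₂]; push_cast; ring
    rw [h, norm_neg, norm_mul, Complex.norm_real, Real.norm_eq_abs, abs_of_pos (by linarith), ← mul_assoc]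
    nlinarith [habs_t]
  have habs_z₁ : norm z₁ = norm a - ρ/2 := by
    rw [hz₁, norm_mul]
    have h1 : norm (1 - (t:ℂ)) = 1 - t := by
      rw [show (1:ℂ) - (t:ℂ) = ((1 - t : ℝ) : ℂ) by push_cast; ring,
        Complex.norm_real, Real.norm_eq_abs, abs_of_pos (by linarith)]
    rw [h1]
    nlinarith [habs_t]
  have habs_z₂ : norm z₂ = norm a + ρ/2 := by
    rw [hz₂, norm_mul]
    have h1 : norm (1 + (t:ℂ)) = 1 + t := by
      rw [show (1:ℂ) + (t:ℂ) = ((1 + t : ℝ) : ℂ) by push_cast; ring,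
        Complex.norm_real, Real.norm_eq_abs, abs_of_pos (by linarith)]
    rw [h1]
    nlinarith [habs_t]
  have hz₁pos : 0 < norm z₁ := by rw [habs_z₁]; linarith
  have hz₂pos : 0 < norm z₂ := by rw [habs_z₂]; linarith
  have hc1 : 1 < norm z₂ / norm z₁ := by
    rw [lt_div_iff₀ hz₁pos, one_mul, habs_z₁, habs_z₂]; linarith
  obtain ⟨K₀, hK₀⟩ := pow_unbounded_of_one_lt (3:ℝ) hc1
  obtain ⟨N, hN⟩ := eventually_atTop.mp (partE_arith hτ1 hτ2 hτtend K₀)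
  obtain ⟨n, hnN, P, hdeg, hlow, hsup⟩ := happrox N
  have harith := hN n hnN
  have hPcont : Continuous fun z => P.eval z - (1:Polynomial ℂ).eval z := by
    simp only [Polynomial.eval_one]
    exact P.continuous_aeval.sub continuous_const
  have hpt : ∀ z ∈ K, norm (P.eval z - 1) ≤ 1/2 := by
    intro z hz
    have h := le_trans (le_supNorm hK hPcont hz) hsup
    simpa using h
  have hub : ∀ z ∈ K, norm (P.eval z) ≤ 3/2 := by
    intro z hz
    have h1 := hpt z hz
    have h2 : norm (P.eval z) ≤ norm (P.eval z - 1) + norm (1:ℂ) := by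
      calc norm (P.eval z) = norm ((P.eval z - 1) + 1) := by ring_nf
        _ ≤ _ := norm_add_le _ _
    simp only [norm_one] at h2
    linarith
  have hlb : ∀ z ∈ K, 1/2 ≤ norm (P.eval z) := by
    intro z hz
    have h1 := hpt z hz
    have h2 : norm (1:ℂ) ≤ norm (P.eval z) + norm (1 - P.eval z) := by
      calc norm (1:ℂ) = norm (P.eval z + (1 - P.eval z)) := by ring_nf
        _ ≤ _ := norm_add_le _ _
    rw [norm_one] at h2
    rw [show (1:ℂ) - P.eval z = -(P.eval z - 1) by ring, norm_neg] at h2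
    linarith
  exact partE_poly a ρ hρpos hsub z₁ z₂ hz₁a hz₂a h12 hz₁pos hz₂pos K₀ hK₀
    P n ⌊(n : ℝ) / τ n⌋₊ hdeg hlow harith hlb hub

/- ### The approximation lemma -/

lemma approx_main {α : ℕ → ℝ} (hadm : Admissible α) {K : Set ℂ} (hK : IsCompact K)
    {τ : ℕ → ℝ} (hτ1 : ∀ n, 1 < τ n) (hτ2 : ∀ n, τ n ≤ 2)
    (hkey : ∀ B : ℝ, ∀ᶠ n : ℕ in atTop, B * psiA α ⌊(n:ℝ)/τ n⌋₊ ≤ psiA α n)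
    {f : ℂ → ℂ}
    (hf : ∀ φ : ℂ → ℂ, ContinuousOn φ K → DifferentiableOn ℂ φ (interior K) →
      ∀ ε : ℝ, 0 < ε →
      0 < alphaLowerDensity α {n : ℕ | supNorm (fun z => taylorSum f n z - φ z) K < ε})
    (φ : Polynomial ℂ) (ε : ℝ) (hε : 0 < ε) (N₀ : ℕ) :
    ∃ n : ℕ, N₀ ≤ n ∧ ∃ P : Polynomial ℂ, P.natDegree ≤ n ∧
      (∀ k : ℕ, k < ⌊(n : ℝ) / τ n⌋₊ → P.coeff k = 0) ∧
      supNorm (fun z => P.eval z - φ.eval z) K ≤ ε := by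
  have hEφ : 0 < alphaLowerDensity α
      {n : ℕ | supNorm (fun z => taylorSum f n z - φ.eval z) K < ε/2} := by
    refine hf (fun z => φ.eval z) φ.continuous_aeval.continuousOn ?_ (ε/2) (by linarith)
    exact (Polynomial.differentiable φ).differentiableOn
  have hE₀ : 0 < alphaLowerDensity α
      {n : ℕ | supNorm (fun z => taylorSum f n z - (0:ℂ)) K < ε/2} := by
    exact hf (fun _ => (0:ℂ)) continuousOn_const (differentiableOn_const 0) (ε/2) (by linarith)
  obtain ⟨N₂, hN₂⟩ := eventually_atTop.mp (window hadm hτ1 hτ2 hkey _ hE₀)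
  obtain ⟨n, hn, hnEφ⟩ := unbounded_of_density hadm _ hEφ (max N₀ N₂)
  obtain ⟨m, hmE₀, hmlo, hmhi⟩ := hN₂ n (le_trans (le_max_right _ _) hn)
  refine ⟨n, le_trans (le_max_left _ _) hn, ?_⟩
  set a : ℕ → ℂ := fun k => iteratedDeriv k f 0 / (k.factorial : ℂ) with ha
  set P : Polynomial ℂ := ∑ k ∈ Finset.Icc (m+1) n, Polynomial.monomial k (a k) with hP
  have hcoeff : ∀ j, P.coeff j = if j ∈ Finset.Icc (m+1) n then a j else 0 := by
    intro j
    rw [hP, Polynomial.finset_sum_coeff,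
      Finset.sum_congr rfl (fun k _ => Polynomial.coeff_monomial)]
    exact Finset.sum_ite_eq' _ _ _
  have hdeg : P.natDegree ≤ n := by
    rw [Polynomial.natDegree_le_iff_coeff_eq_zero]
    intro j hj
    rw [hcoeff j, if_neg]
    simp only [Finset.mem_Icc]
    omega
  have hlow : ∀ k : ℕ, k < ⌊(n : ℝ) / τ n⌋₊ → P.coeff k = 0 := by
    intro k hk
    rw [hcoeff k, if_neg]
    simp only [Finset.mem_Icc]
    omega
  have heval : ∀ z : ℂ, P.eval z = taylorSum f n z - taylorSum f m z := by
    intro z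
    rw [hP, Polynomial.eval_finset_sum]
    simp only [Polynomial.eval_monomial]
    rw [← Finset.Ico_add_one_right_eq_Icc, Finset.sum_Ico_eq_sub _ (by omega : m+1 ≤ n+1)]
    rfl
  refine ⟨P, hdeg, hlow, ?_⟩
  have hs1 : supNorm (fun z => taylorSum f n z - φ.eval z) K < ε/2 := hnEφ
  have hs2 : supNorm (fun z => taylorSum f m z - (0:ℂ)) K < ε/2 := hmE₀
  refine supNorm_le (by linarith) fun z hz => ?_
  have hc1 : Continuous fun z => taylorSum f n z - φ.eval z :=
    (taylorSum_continuous f n).sub φ.continuous_aeval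
  have hc2 : Continuous fun z => taylorSum f m z - (0:ℂ) :=
    (taylorSum_continuous f m).sub continuous_const
  have h1 := le_supNorm hK hc1 hz
  have h2 := le_supNorm hK hc2 hz
  have heq : P.eval z - φ.eval z
      = (taylorSum f n z - φ.eval z) - (taylorSum f m z - 0) := by
    rw [heval z]; ring
  rw [heq]
  calc norm ((taylorSum f n z - φ.eval z) - (taylorSum f m z - 0))
      ≤ norm (taylorSum f n z - φ.eval z) + norm (taylorSum f m z - 0) :=
        norm_sub_le _ _
    _ ≤ ε := by linarith

/-- Proposition 3.8: if `φ_α` fails `Δ2` (with the ratio condition) and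
`FU_α(𝔻, K)` is non-empty, then every polynomial is uniformly approximable on `K` by
strongly incomplete polynomials; in particular `K` has empty interior. -/
theorem stmt14 (α : ℕ → ℝ) (hadm : Admissible α)
    (hratio : ∀ C : ℝ, 1 < C → ∃ n₀ : ℕ, ∀ m n : ℕ, n₀ ≤ m → m ≤ n →
      phiAlpha α n / phiAlpha α (C * n) ≤ phiAlpha α m / phiAlpha α (C * m))
    (hnΔ2 : ¬ Delta2 α)
    (K : Set ℂ) (hK : IsCompact K)
    (hKD : K ⊆ (Metric.closedBall (0 : ℂ) 1)ᶜ) (hKc : IsConnected Kᶜ)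
    (hFU : ∃ f : ℂ → ℂ, DifferentiableOn ℂ f (Metric.ball (0 : ℂ) 1) ∧
      ∀ φ : ℂ → ℂ, ContinuousOn φ K → DifferentiableOn ℂ φ (interior K) →
      ∀ ε : ℝ, 0 < ε →
      0 < alphaLowerDensity α {n : ℕ | supNorm (fun z => taylorSum f n z - φ z) K < ε}) :
    (∃ τ : ℕ → ℝ, (∀ n, 1 < τ n) ∧ Antitone τ ∧
      Filter.Tendsto τ Filter.atTop (nhds 1) ∧
      ∀ φ : Polynomial ℂ, ∀ ε : ℝ, 0 < ε →
        ∃ n : ℕ, ∃ P : Polynomial ℂ, P.natDegree ≤ n ∧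
          (∀ k : ℕ, k < ⌊(n : ℝ) / τ n⌋₊ → P.coeff k = 0) ∧
          supNorm (fun z => P.eval z - φ.eval z) K ≤ ε) ∧
    interior K = ∅ := by
  obtain ⟨f, hfd, hf⟩ := hFU
  obtain ⟨τ, hτ1, hτ2, hτanti, hτtend, hτkey⟩ := tau_exists hadm hratio hnΔ2
  have happrox := approx_main hadm hK hτ1 hτ2 hτkey hf
  refine ⟨⟨τ, hτ1, hτanti, hτtend, fun φ ε hε => ?_⟩, ?_⟩
  · obtain ⟨n, _, hP⟩ := happrox φ ε hε 0
    exact ⟨n, hP⟩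
  · -- empty interior
    refine partE hK hKD hτ1 hτ2 hτtend fun N₀ => ?_
    exact happrox 1 (1/2) (by norm_num) N₀
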